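/- arXiv:2405.16208 — 3 statements merged into one kernel-verified Lean document; each statement's English description precedes it below -/
import Mathlib

section
/- Let f: V → W be a degree d subresonant polynomial between finite-dimensional weighted vector spaces with weights taking negative values, and let φ be a nonzero degree k ≥ 0 monomial function on W (a symmetric tensor in S^k(W*)). Then the pullback φ ∘ f decomposes as φ∘(D_0f ⊗ ... ⊗ D_0f) + Σ_j ψ_j, where each ψ_j is a homogeneous polynomial of degree j on V such that ϖ(ψ_j) ≤ ϖ(φ), and if ϖ(ψ_j) = ϖ(φ) then j > k. -/
structure Weight (V : Type*) [AddCommGroup V] [Module ℝ V] where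
  w : V → EReal
  ne_top : ∀ v, w v ≠ ⊤
  eq_bot_iff : ∀ v, w v = ⊥ ↔ v = 0
  smul_eq : ∀ (c : ℝ), c ≠ 0 → ∀ v, w (c • v) = w v
  add_le : ∀ v u, w (v + u) ≤ max (w v) (w u)

/-- The weight of a `k`-multilinear map:
`ϖ(T) = max{ϖ_W(T(v₁,…,v_k)) - ∑ᵢ ϖ_V(vᵢ) : vᵢ ≠ 0}`. -/
noncomputable def mwt {V W : Type*} [AddCommGroup V] [Module ℝ V]
    [AddCommGroup W] [Module ℝ W] (wV : Weight V) (wW : Weight W) {k : ℕ}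
    (T : MultilinearMap ℝ (fun _ : Fin k => V) W) : EReal :=
  ⨆ (v : Fin k → V) (_ : ∀ i, v i ≠ 0), (wW.w (T v) - ∑ i, wV.w (v i))

/-- A polynomial map `V → W`, recorded through the symmetric multilinear
polarizations of its homogeneous components. -/
structure PolyMap (V W : Type*) [AddCommGroup V] [Module ℝ V]
    [AddCommGroup W] [Module ℝ W] where
  deg : ℕ
  comp : ∀ k : ℕ, MultilinearMap ℝ (fun _ : Fin k => V) W
  symm : ∀ (k : ℕ) (σ : Equiv.Perm (Fin k)) (v : Fin k → V),
    comp k (v ∘ σ) = comp k v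
  zero_of_gt : ∀ k : ℕ, deg < k → comp k = 0

/-- Evaluation of a polynomial map. -/
noncomputable def PolyMap.eval {V W : Type*} [AddCommGroup V] [Module ℝ V]
    [AddCommGroup W] [Module ℝ W] (p : PolyMap V W) (x : V) : W :=
  ∑ k ∈ Finset.range (p.deg + 1), p.comp k (fun _ => x)

/-- The weight of a polynomial map: the maximum of the weights of the
polarizations of its homogeneous components. -/
noncomputable def pweight {V W : Type*} [AddCommGroup V] [Module ℝ V]
    [AddCommGroup W] [Module ℝ W] (wV : Weight V) (wW : Weight W)
    (p : PolyMap V W) : EReal :=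
  ⨆ k : ℕ, mwt wV wW (p.comp k)

/-- The trivial weight on `ℝ`: `0` on nonzero reals and `⊥` at `0`. -/
noncomputable def trivialRWeight : Weight ℝ where
  w t := if t = 0 then ⊥ else 0
  ne_top t := by by_cases h : t = 0 <;> simp [h]
  eq_bot_iff t := by by_cases h : t = 0 <;> simp [h]
  smul_eq c hc t := by
    by_cases h : t = 0 <;> simp [h, smul_eq_mul, mul_eq_zero, hc]
  add_le v u := by
    by_cases hv : v = 0
    · simp [hv]
    · by_cases hu : u = 0
      · simp [hu, hv]
      · by_cases hvu : v + u = 0 <;> simp [hv, hu, hvu]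


section AuxW
variable {V W : Type*} [AddCommGroup V] [Module ℝ V] [AddCommGroup W] [Module ℝ W]

lemma Weight.w_zero (wW : Weight W) : wW.w 0 = ⊥ := (wW.eq_bot_iff 0).2 rfl

lemma Weight.w_neg (wW : Weight W) (v : W) : wW.w (-v) = wW.w v := by
  simpa using wW.smul_eq (-1) (by norm_num) v

lemma Weight.w_ne_bot (wW : Weight W) {v : W} (hv : v ≠ 0) : wW.w v ≠ ⊥ :=
  fun h => hv ((wW.eq_bot_iff v).1 h)

lemma Weight.sum_le (wW : Weight W) {ι : Type*} (t : Finset ι) (u : ι → W) :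
    wW.w (∑ i ∈ t, u i) ≤ t.sup (fun i => wW.w (u i)) := by
  induction t using Finset.cons_induction with
  | empty => simp [wW.w_zero]
  | cons a t ha ih =>
      rw [Finset.sum_cons, Finset.sup_cons]
      exact (wW.add_le _ _).trans (sup_le_sup le_rfl ih)

lemma ereal_coe_sum {ι : Type*} (s : Finset ι) (g : ι → ℝ) :
    ((∑ i ∈ s, g i : ℝ) : EReal) = ∑ i ∈ s, (g i : EReal) := by
  induction s using Finset.cons_induction with
  | empty => simp
  | cons a t ha ih => rw [Finset.sum_cons, Finset.sum_cons, EReal.coe_add, ih]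

/-- In a finite-dimensional space, a weight is bounded below on nonzero vectors. -/
lemma Weight.exists_lb [FiniteDimensional ℝ W] (wW : Weight W) :
    ∃ B : ℝ, ∀ v : W, v ≠ 0 → (B : EReal) ≤ wW.w v := by
  classical
  set S : Set EReal := wW.w '' {v | v ≠ 0} with hSdef
  have hrep : ∀ r : S, ∃ v : W, v ≠ 0 ∧ wW.w v = r := by
    rintro ⟨r, v, hv, hvr⟩; exact ⟨v, hv, hvr⟩
  choose rep hrep0 hrepw using hrep
  have hLI : LinearIndependent ℝ rep := by
    rw [linearIndependent_iff'']
    intro s g hg hsum i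
    by_contra hgi
    have his : i ∈ s := by by_contra h; exact hgi (hg i h)
    have hne : (s.filter (fun i => g i ≠ 0)).Nonempty := ⟨i, Finset.mem_filter.2 ⟨his, hgi⟩⟩
    obtain ⟨i₀, hi₀mem, hi₀max⟩ := Finset.exists_max_image _ (fun r : S => (r : EReal)) hne
    obtain ⟨hi₀s, hgi₀⟩ := Finset.mem_filter.1 hi₀mem
    have hsplit : g i₀ • rep i₀ = - ∑ j ∈ s.erase i₀, g j • rep j := by
      have h2 := Finset.add_sum_erase s (fun j => g j • rep j) hi₀s
      rw [← h2] at hsum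
      exact eq_neg_of_add_eq_zero_left hsum
    have hw0 : wW.w (rep i₀) = (i₀ : EReal) := hrepw i₀
    have hwlhs : wW.w (g i₀ • rep i₀) = (i₀ : EReal) := by
      rw [wW.smul_eq _ hgi₀, hw0]
    have hbot : (⊥ : EReal) < (i₀ : EReal) := by
      rw [bot_lt_iff_ne_bot, ← hw0]
      exact wW.w_ne_bot (hrep0 i₀)
    have hwrhs : wW.w (∑ j ∈ s.erase i₀, g j • rep j) < (i₀ : EReal) := by
      refine lt_of_le_of_lt (wW.sum_le _ _) ?_
      rw [Finset.sup_lt_iff hbot]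
      intro b hb
      by_cases hgb : g b = 0
      · simpa [hgb, wW.w_zero] using hbot
      · rw [wW.smul_eq _ hgb, hrepw b]
        have hbs : b ∈ s.filter (fun i => g i ≠ 0) :=
          Finset.mem_filter.2 ⟨Finset.mem_of_mem_erase hb, hgb⟩
        have hle : (b : EReal) ≤ (i₀ : EReal) := hi₀max b hbs
        have hne' : (b : EReal) ≠ (i₀ : EReal) := by
          intro h
          exact (Finset.ne_of_mem_erase hb) (Subtype.ext h)
        exact lt_of_le_of_ne hle hne'
    rw [hsplit, wW.w_neg] at hwlhs
    exact absurd hwlhs.symm.le (not_le.2 hwrhs)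
  have hfin : S.Finite := by
    rw [← Set.finite_coe_iff]
    exact hLI.finite
  by_cases hSe : S.Nonempty
  · have hne : hfin.toFinset.Nonempty := by rwa [Set.Finite.toFinset_nonempty]
    set m := hfin.toFinset.min' hne with hm
    have hmS : m ∈ S := by
      have := hfin.toFinset.min'_mem hne
      rwa [Set.Finite.mem_toFinset] at this
    obtain ⟨v₀, hv₀, hv₀w⟩ := hmS
    have hmbot : m ≠ ⊥ := hv₀w ▸ wW.w_ne_bot hv₀
    have hmtop : m ≠ ⊤ := hv₀w ▸ wW.ne_top v₀
    refine ⟨m.toReal, fun v hv => ?_⟩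
    rw [EReal.coe_toReal hmtop hmbot]
    exact hfin.toFinset.min'_le _ (by rw [Set.Finite.mem_toFinset]; exact ⟨v, hv, rfl⟩)
  · exact ⟨0, fun v hv => absurd ⟨v, hv, rfl⟩ (fun h => hSe ⟨_, h⟩)⟩

lemma trivial_w_le_zero (t : ℝ) : trivialRWeight.w t ≤ 0 := by
  by_cases h : t = 0 <;> simp [trivialRWeight, h]

variable (wV : Weight V) (wW : Weight W)

lemma sum_wt_real {k : ℕ} (v : Fin k → V) (hv : ∀ i, v i ≠ 0) :
    (∑ i, wV.w (v i)) = ((∑ i, (wV.w (v i)).toReal : ℝ) : EReal) := by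
  rw [ereal_coe_sum]
  exact Finset.sum_congr rfl fun i _ =>
    (EReal.coe_toReal (wV.ne_top _) (wV.w_ne_bot (hv i))).symm

lemma le_mwt {k : ℕ} (T : MultilinearMap ℝ (fun _ : Fin k => V) W)
    (v : Fin k → V) (hv : ∀ i, v i ≠ 0) :
    wW.w (T v) - ∑ i, wV.w (v i) ≤ mwt wV wW T :=
  le_iSup_of_le v (le_iSup_of_le hv le_rfl)

lemma mwt_le {k : ℕ} {T : MultilinearMap ℝ (fun _ : Fin k => V) W} {b : EReal}
    (h : ∀ v : Fin k → V, (∀ i, v i ≠ 0) → wW.w (T v) - ∑ i, wV.w (v i) ≤ b) :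
    mwt wV wW T ≤ b :=
  iSup_le fun v => iSup_le fun hv => h v hv

lemma mwt_zero {k : ℕ} : mwt wV wW (0 : MultilinearMap ℝ (fun _ : Fin k => V) W) = ⊥ := by
  refine le_bot_iff.1 (mwt_le wV wW fun v hv => ?_)
  simp [wW.w_zero, EReal.bot_sub]

lemma weight_apply_le {k : ℕ} (T : MultilinearMap ℝ (fun _ : Fin k => V) W)
    (v : Fin k → V) (hv : ∀ i, v i ≠ 0) :
    wW.w (T v) ≤ mwt wV wW T + ∑ i, wV.w (v i) := by
  have h := le_mwt wV wW T v hv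
  rw [sum_wt_real wV v hv] at h ⊢
  exact (EReal.sub_le_iff_le_add (Or.inl (EReal.coe_ne_bot _))
    (Or.inl (EReal.coe_ne_top _))).1 h

lemma mwt_smul_le {k : ℕ} (c : ℝ) (T : MultilinearMap ℝ (fun _ : Fin k => V) ℝ) :
    mwt wV trivialRWeight (c • T) ≤ mwt wV trivialRWeight T := by
  by_cases hc : c = 0
  · subst hc; rw [zero_smul, mwt_zero]; exact bot_le
  refine mwt_le wV trivialRWeight fun v hv => ?_
  have h1 : trivialRWeight.w ((c • T) v) = trivialRWeight.w (T v) := by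
    rw [MultilinearMap.smul_apply]
    exact trivialRWeight.smul_eq c hc (T v)
  rw [h1]
  exact le_mwt wV trivialRWeight T v hv

lemma mwt_sum_le {k : ℕ} {α : Type*} (s : Finset α)
    (T : α → MultilinearMap ℝ (fun _ : Fin k => V) ℝ) {b : EReal}
    (hb : ∀ a ∈ s, mwt wV trivialRWeight (T a) ≤ b) :
    mwt wV trivialRWeight (∑ a ∈ s, T a) ≤ b := by
  refine mwt_le wV trivialRWeight fun v hv => ?_
  rw [sum_wt_real wV v hv]
  rw [EReal.sub_le_iff_le_add (Or.inl (EReal.coe_ne_bot _)) (Or.inl (EReal.coe_ne_top _))]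
  rw [MultilinearMap.sum_apply]
  refine le_trans (trivialRWeight.sum_le s _) (Finset.sup_le fun a ha => ?_)
  have h1 := le_mwt wV trivialRWeight (T a) v hv
  rw [sum_wt_real wV v hv, EReal.sub_le_iff_le_add (Or.inl (EReal.coe_ne_bot _))
    (Or.inl (EReal.coe_ne_top _))] at h1
  exact h1.trans (add_le_add_left (hb a ha) _)

lemma mwt_perm_le {k : ℕ} (σ : Equiv.Perm (Fin k)) (T : MultilinearMap ℝ (fun _ : Fin k => V) ℝ) :
    mwt wV trivialRWeight (T.domDomCongr σ) ≤ mwt wV trivialRWeight T := by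
  refine mwt_le wV trivialRWeight fun v hv => ?_
  have h1 : (T.domDomCongr σ) v = T (fun i => v (σ i)) := rfl
  have h2 : ∑ i, wV.w (v (σ i)) = ∑ i, wV.w (v i) :=
    Equiv.sum_comp σ (fun i => wV.w (v i))
  rw [h1, ← h2]
  exact le_mwt wV trivialRWeight T _ (fun i => hv (σ i))

end AuxW

section Con
variable {V W : Type*} [AddCommGroup V] [Module ℝ V] [AddCommGroup W] [Module ℝ W]
variable (f : PolyMap V W) {k : ℕ} (φ : MultilinearMap ℝ (fun _ : Fin k => W) ℝ)

/-- `φ(F_{m 0}(v-block 0), …)` as a multilinear map on the sigma type of blocks. -/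
noncomputable def blockMap (m : Fin k → ℕ) :
    MultilinearMap ℝ (fun _ : (Σ i : Fin k, Fin (m i)) => V) ℝ where
  toFun v := φ (fun i => f.comp (m i) (fun t => v ⟨i, t⟩))
  map_update_add' := by
    intro dec v s x y
    obtain ⟨i₀, t₀⟩ := s
    classical
    have claim : ∀ z : V,
        (fun i => f.comp (m i) (fun t => Function.update v ⟨i₀, t₀⟩ z ⟨i, t⟩)) =
        Function.update (fun i => f.comp (m i) (fun t => v ⟨i, t⟩)) i₀
          (f.comp (m i₀) (Function.update (fun t => v ⟨i₀, t⟩) t₀ z)) := by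
      intro z
      funext i
      by_cases hi : i = i₀
      · subst hi
        rw [Function.update_self]
        congr 1
        funext t
        by_cases ht : t = t₀
        · subst ht; rw [Function.update_self, Function.update_self]
        · rw [Function.update_of_ne ht, Function.update_of_ne]
          intro h
          exact ht (by cases h; rfl)
      · rw [Function.update_of_ne hi]
        congr 1
        funext t
        rw [Function.update_of_ne]
        intro h
        exact hi (congrArg Sigma.fst h)
    simp only [claim]
    rw [(f.comp (m i₀)).map_update_add, φ.map_update_add]
  map_update_smul' := by
    intro dec v s c x
    obtain ⟨i₀, t₀⟩ := s
    classical
    have claim : ∀ z : V,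
        (fun i => f.comp (m i) (fun t => Function.update v ⟨i₀, t₀⟩ z ⟨i, t⟩)) =
        Function.update (fun i => f.comp (m i) (fun t => v ⟨i, t⟩)) i₀
          (f.comp (m i₀) (Function.update (fun t => v ⟨i₀, t⟩) t₀ z)) := by
      intro z
      funext i
      by_cases hi : i = i₀
      · subst hi
        rw [Function.update_self]
        congr 1
        funext t
        by_cases ht : t = t₀
        · subst ht; rw [Function.update_self, Function.update_self]
        · rw [Function.update_of_ne ht, Function.update_of_ne]
          intro h
          exact ht (by cases h; rfl)
      · rw [Function.update_of_ne hi]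
        congr 1
        funext t
        rw [Function.update_of_ne]
        intro h
        exact hi (congrArg Sigma.fst h)
    simp only [claim]
    rw [(f.comp (m i₀)).map_update_smul, φ.map_update_smul]

@[simp] lemma blockMap_apply (m : Fin k → ℕ) (v : (Σ i : Fin k, Fin (m i)) → V) :
    blockMap f φ m v = φ (fun i => f.comp (m i) (fun t => v ⟨i, t⟩)) := rfl

/-- `blockMap` transported to `Fin j` when the total degree matches, else `0`. -/
noncomputable def castT (j : ℕ) (m : Fin k → ℕ) :
    MultilinearMap ℝ (fun _ : Fin j => V) ℝ :=
  if h : Fintype.card (Σ i : Fin k, Fin (m i)) = j then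
    (blockMap f φ m).domDomCongr (Fintype.equivFinOfCardEq h)
  else 0

lemma card_sigma_fin (m : Fin k → ℕ) :
    Fintype.card (Σ i : Fin k, Fin (m i)) = ∑ i, m i := by
  simp [Fintype.card_sigma]

lemma castT_diag (j : ℕ) (m : Fin k → ℕ) (h : ∑ i, m i = j) (x : V) :
    castT f φ j m (fun _ => x) = φ (fun i => f.comp (m i) (fun _ => x)) := by
  rw [castT, dif_pos ((card_sigma_fin m).trans h)]
  rfl

/-- Index set of lower-order terms of total degree `j`. -/
noncomputable def Aset (k : ℕ) (j : ℕ) : Finset (Fin k → ℕ) := by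
  classical
  exact ((Fintype.piFinset (fun _ : Fin k => Finset.range (f.deg + 1))).erase
    (fun _ => 1)).filter (fun m => ∑ i, m i = j)

noncomputable def qcomp (j : ℕ) : MultilinearMap ℝ (fun _ : Fin j => V) ℝ :=
  ((j.factorial : ℝ))⁻¹ •
    ∑ σ : Equiv.Perm (Fin j), (∑ m ∈ Aset f k j, castT f φ j m).domDomCongr σ

lemma qcomp_symm (j : ℕ) (σ : Equiv.Perm (Fin j)) (v : Fin j → V) :
    qcomp f φ j (v ∘ σ) = qcomp f φ j v := by
  simp only [qcomp, MultilinearMap.smul_apply, MultilinearMap.sum_apply]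
  congr 1
  have h1 : ∀ τ : Equiv.Perm (Fin j),
      ((∑ m ∈ Aset f k j, castT f φ j m).domDomCongr τ) (v ∘ σ) =
      (∑ m ∈ Aset f k j, castT f φ j m) (v ∘ ⇑(τ.trans σ)) := by
    intro τ; rfl
  have h2 : ∀ τ : Equiv.Perm (Fin j),
      ((∑ m ∈ Aset f k j, castT f φ j m).domDomCongr τ) v =
      (∑ m ∈ Aset f k j, castT f φ j m) (v ∘ ⇑τ) := by
    intro τ; rfl
  simp only [h1, h2]
  exact Fintype.sum_bijective (fun τ => σ * τ) (Group.mulLeft_bijective σ) _ _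
    (fun τ => rfl)

lemma qcomp_zero_of_gt (j : ℕ) (h : k * f.deg < j) : qcomp f φ j = 0 := by
  have hA : Aset f k j = ∅ := by
    rw [Finset.eq_empty_iff_forall_notMem]
    intro m hm
    rw [Aset, Finset.mem_filter, Finset.mem_erase, Fintype.mem_piFinset] at hm
    obtain ⟨⟨_, hbox⟩, hsum⟩ := hm
    have hle : ∑ i, m i ≤ k * f.deg := by
      calc ∑ i, m i ≤ ∑ _i : Fin k, f.deg :=
            Finset.sum_le_sum fun i _ => Nat.lt_succ_iff.1 (Finset.mem_range.1 (hbox i))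
        _ = k * f.deg := by simp [Finset.sum_const, mul_comm]
    omega
  simp only [qcomp, hA, Finset.sum_empty]
  ext v
  simp

lemma qcomp_diag (j : ℕ) (x : V) :
    qcomp f φ j (fun _ => x) = ∑ m ∈ Aset f k j, castT f φ j m (fun _ => x) := by
  simp only [qcomp, MultilinearMap.smul_apply, MultilinearMap.sum_apply]
  have h1 : ∀ τ : Equiv.Perm (Fin j),
      ((∑ m ∈ Aset f k j, castT f φ j m).domDomCongr τ) (fun _ => x) =
      ∑ m ∈ Aset f k j, castT f φ j m (fun _ => x) := by
    intro τ
    rw [MultilinearMap.domDomCongr_apply]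
    simp [MultilinearMap.sum_apply]
  rw [Finset.sum_congr rfl (fun τ _ => h1 τ), Finset.sum_const]
  rw [Finset.card_univ, Fintype.card_perm, Fintype.card_fin]
  rw [← Nat.cast_smul_eq_nsmul ℝ, smul_smul,
    inv_mul_cancel₀ (by exact_mod_cast Nat.factorial_ne_zero j), one_smul]

lemma comp_zero_arg (n : ℕ) (h : n = 0) (u : Fin n → V) :
    f.comp n u = f.comp 0 (fun _ => (0 : V)) := by
  subst h
  congr 1
  funext t
  exact t.elim0

/-- The key per-term weight bound. -/
lemma castT_wt_le (wV : Weight V) (wW : Weight W)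
    (hfn : ∀ n, mwt wV wW (f.comp n) ≤ 0) (j : ℕ) (m : Fin k → ℕ) (c : EReal)
    (hc : 0 ≤ c ∨ ∃ i₀, m i₀ = 0 ∧ wW.w (f.comp 0 (fun _ => (0 : V))) ≤ c) :
    mwt wV trivialRWeight (castT f φ j m) ≤ mwt wW trivialRWeight φ + c := by
  classical
  by_cases h : Fintype.card (Σ i : Fin k, Fin (m i)) = j
  case neg =>
    rw [castT, dif_neg h, mwt_zero]
    exact bot_le
  rw [castT, dif_pos h]
  set e := Fintype.equivFinOfCardEq h with he
  refine mwt_le wV trivialRWeight fun v hv => ?_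
  set u : (Σ i : Fin k, Fin (m i)) → V := fun s => v (e s) with hu
  have hunz : ∀ s, u s ≠ 0 := fun s => hv (e s)
  set y : Fin k → W := fun i => f.comp (m i) (fun t => u ⟨i, t⟩) with hy
  have happ : ((blockMap f φ m).domDomCongr e) v = φ y := rfl
  rw [happ]
  by_cases hynz : ∀ i, y i ≠ 0
  case neg =>
    push_neg at hynz
    obtain ⟨i, hi⟩ := hynz
    have hz : φ y = 0 := φ.map_coord_zero i hi
    rw [hz]
    have : trivialRWeight.w (0 : ℝ) = ⊥ := trivialRWeight.w_zero
    rw [this, EReal.bot_sub]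
    exact bot_le
  -- all blocks nonzero
  by_cases hφy : φ y = 0
  · rw [hφy]
    have : trivialRWeight.w (0 : ℝ) = ⊥ := trivialRWeight.w_zero
    rw [this, EReal.bot_sub]
    exact bot_le
  have hwphi : trivialRWeight.w (φ y) = ((0 : ℝ) : EReal) := by
    simp [trivialRWeight, hφy]
  set ri : Fin k → ℝ := fun i => (wW.w (y i)).toReal with hri
  have hyiw : ∀ i, wW.w (y i) = (ri i : EReal) := fun i =>
    (EReal.coe_toReal (wW.ne_top _) (wW.w_ne_bot (hynz i))).symm
  set as : (Σ i : Fin k, Fin (m i)) → ℝ := fun s => (wV.w (u s)).toReal with has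
  have husw : ∀ s, wV.w (u s) = (as s : EReal) := fun s =>
    (EReal.coe_toReal (wV.ne_top _) (wV.w_ne_bot (hunz s))).symm
  -- per-block real bound
  have hblock : ∀ i, ri i ≤ ∑ t : Fin (m i), as ⟨i, t⟩ := by
    intro i
    have h1 := weight_apply_le wV wW (f.comp (m i)) (fun t => u ⟨i, t⟩)
      (fun t => hunz ⟨i, t⟩)
    have h2 : mwt wV wW (f.comp (m i)) + ∑ t, wV.w (u ⟨i, t⟩) ≤
        0 + ∑ t, wV.w (u ⟨i, t⟩) := add_le_add_left (hfn (m i)) _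
    rw [zero_add] at h2
    have h3 := h1.trans h2
    rw [hyiw i] at h3
    have h4 : (∑ t, wV.w (u ⟨i, t⟩)) = ((∑ t : Fin (m i), as ⟨i, t⟩ : ℝ) : EReal) := by
      rw [ereal_coe_sum]
      exact Finset.sum_congr rfl fun t _ => husw ⟨i, t⟩
    rw [h4] at h3
    exact_mod_cast h3
  -- total bound with defect `creal`
  obtain ⟨creal, hcreal, htot⟩ :
      ∃ creal : ℝ, (creal : EReal) ≤ c ∧
        ∑ i, ri i ≤ creal + ∑ s : (Σ i : Fin k, Fin (m i)), as s := by
    have hsig : ∑ s : (Σ i : Fin k, Fin (m i)), as s = ∑ i, ∑ t : Fin (m i), as ⟨i, t⟩ := by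
      rw [← Finset.univ_sigma_univ, Finset.sum_sigma]
    rcases hc with hc0 | ⟨i₀, hmi₀, hci₀⟩
    · refine ⟨0, hc0, ?_⟩
      rw [zero_add, hsig]
      exact Finset.sum_le_sum fun i _ => hblock i
    · have hyi₀ : y i₀ = f.comp 0 (fun _ => (0 : V)) := comp_zero_arg f _ hmi₀ _
      refine ⟨ri i₀, ?_, ?_⟩
      · rw [← hyiw i₀, hyi₀]
        exact hci₀
      · rw [hsig]
        have hsplit1 : ∑ i, ri i = ri i₀ + ∑ i ∈ Finset.univ.erase i₀, ri i :=
          (Finset.add_sum_erase _ _ (Finset.mem_univ i₀)).symm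
        have hsplit2 : ∑ i, ∑ t : Fin (m i), as ⟨i, t⟩ =
            ∑ i ∈ Finset.univ.erase i₀, ∑ t : Fin (m i), as ⟨i, t⟩ := by
          rw [← Finset.add_sum_erase _ _ (Finset.mem_univ i₀)]
          have : ∑ t : Fin (m i₀), as ⟨i₀, t⟩ = 0 := by
            haveI : IsEmpty (Fin (m i₀)) := by rw [hmi₀]; infer_instance
            simp
          rw [this, zero_add]
        rw [hsplit1, hsplit2]
        exact add_le_add_right (Finset.sum_le_sum fun i _ => hblock i) _
  -- assemble
  have hsumv : ∑ i, wV.w (v i) = ((∑ s : (Σ i : Fin k, Fin (m i)), as s : ℝ) : EReal) := by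
    have h5 : ∑ s : (Σ i : Fin k, Fin (m i)), wV.w (v (e s)) = ∑ i, wV.w (v i) :=
      Equiv.sum_comp e (fun i => wV.w (v i))
    rw [← h5, ereal_coe_sum]
    exact Finset.sum_congr rfl fun s _ => husw s
  have hkey : ((-(∑ i, ri i) : ℝ) : EReal) ≤ mwt wW trivialRWeight φ := by
    have h6 := le_mwt wW trivialRWeight φ y hynz
    rw [hwphi] at h6
    have h7 : ∑ i, wW.w (y i) = ((∑ i, ri i : ℝ) : EReal) := by
      rw [ereal_coe_sum]
      exact Finset.sum_congr rfl fun i _ => hyiw i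
    rw [h7, ← EReal.coe_sub] at h6
    simpa using h6
  rw [hwphi, hsumv, ← EReal.coe_sub]
  have h8 : (0 : ℝ) - ∑ s : (Σ i : Fin k, Fin (m i)), as s ≤ -(∑ i, ri i) + creal := by
    have := htot
    linarith
  calc ((0 - ∑ s : (Σ i : Fin k, Fin (m i)), as s : ℝ) : EReal)
      ≤ ((-(∑ i, ri i) + creal : ℝ) : EReal) := EReal.coe_le_coe_iff.2 h8
    _ = ((-(∑ i, ri i) : ℝ) : EReal) + (creal : EReal) := EReal.coe_add _ _
    _ ≤ mwt wW trivialRWeight φ + c := add_le_add hkey hcreal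

lemma eval_identity (x : V) :
    φ (fun _ => f.eval x) = φ (fun _ => f.comp 1 (fun _ => x)) +
      ∑ j ∈ Finset.range (k * f.deg + 1), qcomp f φ j (fun _ => x) := by
  classical
  set box := Fintype.piFinset (fun _ : Fin k => Finset.range (f.deg + 1)) with hbox
  have h1 : φ (fun _ => f.eval x) =
      ∑ m ∈ box, φ (fun i => f.comp (m i) (fun _ => x)) := by
    have := φ.map_sum_finset (fun _ n => f.comp n (fun _ => x))
      (fun _ => Finset.range (f.deg + 1))
    rw [PolyMap.eval]
    exact this
  have h2 : ∑ j ∈ Finset.range (k * f.deg + 1), qcomp f φ j (fun _ => x) =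
      ∑ m ∈ box.erase (fun _ => 1), φ (fun i => f.comp (m i) (fun _ => x)) := by
    have h3 : ∀ j, qcomp f φ j (fun _ => x) =
        ∑ m ∈ Aset f k j, φ (fun i => f.comp (m i) (fun _ => x)) := by
      intro j
      rw [qcomp_diag]
      refine Finset.sum_congr rfl fun m hm => ?_
      rw [Aset, Finset.mem_filter] at hm
      exact castT_diag f φ j m hm.2 x
    have hmaps : ∀ m ∈ box.erase (fun _ => 1), (∑ i, m i) ∈ Finset.range (k * f.deg + 1) := by
      intro m hm
      rw [Finset.mem_erase, hbox, Fintype.mem_piFinset] at hm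
      rw [Finset.mem_range]
      have : ∑ i, m i ≤ k * f.deg := by
        calc ∑ i, m i ≤ ∑ _i : Fin k, f.deg :=
              Finset.sum_le_sum fun i _ => Nat.lt_succ_iff.1 (Finset.mem_range.1 (hm.2 i))
          _ = k * f.deg := by simp [Finset.sum_const, mul_comm]
      omega
    calc ∑ j ∈ Finset.range (k * f.deg + 1), qcomp f φ j (fun _ => x)
        = ∑ j ∈ Finset.range (k * f.deg + 1), ∑ m ∈ Aset f k j,
            φ (fun i => f.comp (m i) (fun _ => x)) :=
          Finset.sum_congr rfl fun j _ => h3 j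
      _ = ∑ m ∈ box.erase (fun _ => 1), φ (fun i => f.comp (m i) (fun _ => x)) :=
          Finset.sum_fiberwise_of_maps_to hmaps _
  rw [h1, h2]
  by_cases hone : (fun _ : Fin k => 1) ∈ box
  · rw [← Finset.add_sum_erase box _ hone]
  · rw [Finset.erase_eq_of_notMem hone]
    have : φ (fun _ => f.comp 1 (fun _ => x)) = 0 := by
      rw [hbox, Fintype.mem_piFinset] at hone
      push_neg at hone
      obtain ⟨i, hi⟩ := hone
      rw [Finset.mem_range] at hi
      have hdeg : f.deg = 0 := by omega
      have hcomp : f.comp 1 = 0 := f.zero_of_gt 1 (by omega)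
      refine φ.map_coord_zero i ?_
      rw [hcomp]
      rfl
    rw [this, zero_add]

end Con

/-- Block triangular form of the pullback `f^* φ = φ ∘ f` of a monomial `φ`
(a symmetric `k`-tensor on `W`) under a subresonant polynomial map `f`:
`φ ∘ f = φ ∘ (D₀f ⊗ ⋯ ⊗ D₀f) + ∑ⱼ ψⱼ` where each homogeneous term `ψⱼ`
satisfies `ϖ(ψⱼ) ≤ ϖ(φ)`, with equality only if `j > k`. -/
theorem pullback_block_triangular {V W : Type*}
    [AddCommGroup V] [Module ℝ V] [FiniteDimensional ℝ V]
    [AddCommGroup W] [Module ℝ W] [FiniteDimensional ℝ W]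
    (wV : Weight V) (wW : Weight W)
    (hnegV : ∀ v : V, v ≠ 0 → wV.w v < 0)
    (hnegW : ∀ x : W, x ≠ 0 → wW.w x < 0)
    (f : PolyMap V W) (hf : pweight wV wW f ≤ 0)
    (k : ℕ) (φ : MultilinearMap ℝ (fun _ : Fin k => W) ℝ)
    (hφsymm : ∀ (σ : Equiv.Perm (Fin k)) (x : Fin k → W), φ (x ∘ σ) = φ x)
    (hφ : φ ≠ 0) :
    ∃ q : PolyMap V ℝ,
      (∀ x : V, φ (fun _ => f.eval x) =
        φ (fun _ => f.comp 1 (fun _ => x)) + q.eval x) ∧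
      (∀ j : ℕ, k * f.deg < j → q.comp j = 0) ∧
      (∀ j : ℕ, mwt wV trivialRWeight (q.comp j) ≤ mwt wW trivialRWeight φ) ∧
      (∀ j : ℕ, mwt wV trivialRWeight (q.comp j) = mwt wW trivialRWeight φ →
        k < j) := by
  classical
  have hfn : ∀ n, mwt wV wW (f.comp n) ≤ 0 := fun n =>
    (le_iSup (fun n => mwt wV wW (f.comp n)) n).trans hf
  -- the weight of φ is a (finite) real number
  have hφbot : mwt wW trivialRWeight φ ≠ ⊥ := by
    have hex : ∃ y : Fin k → W, φ y ≠ 0 := by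
      by_contra h
      push_neg at h
      exact hφ (MultilinearMap.ext fun y => by rw [h y]; rfl)
    obtain ⟨y, hy⟩ := hex
    have hynz : ∀ i, y i ≠ 0 := fun i hi => hy (φ.map_coord_zero i hi)
    have h1 := le_mwt wW trivialRWeight φ y hynz
    have h2 : trivialRWeight.w (φ y) = ((0 : ℝ) : EReal) := by
      simp [trivialRWeight, hy]
    rw [h2, sum_wt_real wW y hynz, ← EReal.coe_sub] at h1
    intro hb
    rw [hb, le_bot_iff] at h1
    exact EReal.coe_ne_bot _ h1
  have hφtop : mwt wW trivialRWeight φ ≠ ⊤ := by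
    obtain ⟨B, hB⟩ := wW.exists_lb
    have h1 : mwt wW trivialRWeight φ ≤ ((k * (-B) : ℝ) : EReal) := by
      refine mwt_le wW trivialRWeight fun y hy => ?_
      rw [sum_wt_real wW y hy,
        EReal.sub_le_iff_le_add (Or.inl (EReal.coe_ne_bot _)) (Or.inl (EReal.coe_ne_top _)),
        ← EReal.coe_add]
      refine (trivial_w_le_zero _).trans ?_
      have hsum : (k : ℝ) * B ≤ ∑ i, (wW.w (y i)).toReal := by
        calc (k : ℝ) * B = ∑ _i : Fin k, B := by simp [Finset.sum_const, mul_comm]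
          _ ≤ ∑ i, (wW.w (y i)).toReal := by
              refine Finset.sum_le_sum fun i _ => ?_
              have := hB (y i) (hy i)
              rw [← EReal.coe_toReal (wW.ne_top (y i)) (wW.w_ne_bot (hy i))] at this
              exact_mod_cast this
      have : (0 : ℝ) ≤ k * (-B) + ∑ i, (wW.w (y i)).toReal := by
        have : (k : ℝ) * (-B) = -((k : ℝ) * B) := by ring
        linarith
      exact_mod_cast this
    exact fun ht => (show (⊤ : EReal) ≤ _ from ht ▸ h1).not_gt (EReal.coe_lt_top _)
  -- common bound on the components of q
  have hq : ∀ (j : ℕ) (c : EReal),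
      (∀ m ∈ Aset f k j, mwt wV trivialRWeight (castT f φ j m) ≤
        mwt wW trivialRWeight φ + c) →
      mwt wV trivialRWeight (qcomp f φ j) ≤ mwt wW trivialRWeight φ + c := by
    intro j c hc
    refine (mwt_smul_le wV _ _).trans ?_
    refine mwt_sum_le wV Finset.univ _ (fun σ _ => ?_)
    refine (mwt_perm_le wV σ _).trans ?_
    exact mwt_sum_le wV _ _ hc
  refine ⟨⟨k * f.deg, qcomp f φ, fun j σ v => qcomp_symm f φ j σ v,
    fun j hj => qcomp_zero_of_gt f φ j hj⟩, ?_, ?_, ?_, ?_⟩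
  · intro x
    exact eval_identity f φ x
  · intro j hj
    exact qcomp_zero_of_gt f φ j hj
  · intro j
    have h1 := hq j 0 (fun m _ => castT_wt_le f φ wV wW hfn j m 0 (Or.inl le_rfl))
    rwa [add_zero] at h1
  · intro j heq
    by_contra hkj
    push_neg at hkj
    -- every lower-order term of degree `j ≤ k` contains a constant block
    have hm0 : ∀ m ∈ Aset f k j, ∃ i₀, m i₀ = 0 := by
      intro m hm
      rw [Aset, Finset.mem_filter, Finset.mem_erase] at hm
      obtain ⟨⟨hne1, _⟩, hsum⟩ := hm
      by_contra h0
      push_neg at h0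
      have h1 : ∀ i : Fin k, 1 ≤ m i := fun i => Nat.one_le_iff_ne_zero.2 (h0 i)
      have h2 : ∑ _i : Fin k, 1 ≤ ∑ i, m i := Finset.sum_le_sum fun i _ => h1 i
      rw [Finset.sum_const, Finset.card_univ, Fintype.card_fin, smul_eq_mul, mul_one] at h2
      have hjk : j = k := le_antisymm hkj (hsum ▸ h2)
      have h3 : ∑ i, m i = ∑ _i : Fin k, 1 := by
        rw [hsum, hjk, Finset.sum_const, Finset.card_univ, Fintype.card_fin,
          smul_eq_mul, mul_one]
      have h4 := (Finset.sum_eq_sum_iff_of_le (fun i _ => h1 i)).1 h3.symm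
      exact hne1 (funext fun i => (h4 i (Finset.mem_univ i)).symm)
    set c0 : EReal := wW.w (f.comp 0 (fun _ => (0 : V))) with hc0def
    have hc0 : c0 < 0 := by
      by_cases hz : f.comp 0 (fun _ => (0 : V)) = 0
      · rw [hc0def, hz, wW.w_zero]
        exact bot_lt_iff_ne_bot.2 (by simp)
      · exact hnegW _ hz
    have hb := hq j c0 (fun m hm =>
      castT_wt_le f φ wV wW hfn j m c0 (Or.inr ⟨(hm0 m hm).choose, (hm0 m hm).choose_spec, le_rfl⟩))
    have hlt : mwt wW trivialRWeight φ + c0 < mwt wW trivialRWeight φ := by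
      have := EReal.add_lt_add_of_lt_of_le hc0 (le_refl (mwt wW trivialRWeight φ)) hφbot hφtop
      rw [zero_add] at this
      calc mwt wW trivialRWeight φ + c0 = c0 + mwt wW trivialRWeight φ := add_comm _ _
        _ < mwt wW trivialRWeight φ := this
    rw [heq] at hb
    exact absurd (hb.trans_lt hlt) (lt_irrefl _)
end

section
/- Let (X, μ) be a probability space and f: X → X a measure-preserving transformation. Let φ: X → [1, ∞) be a measurable function such that for some M ≥ 1 one has φ(f^n(x)) ≤ M^n φ(x) for almost every x and all n ≥ 0. Then φ is tempered: for almost every x, lim_{n→∞} (1/n) log φ(f^n(x)) = 0. -/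
open Filter MeasureTheory

namespace TemperedAux

variable {X : Type*} [MeasurableSpace X]

/-- Garsia's maximal function: `P f h n x = max (0, max_{1 ≤ k ≤ n} S_k h x)`. -/
noncomputable def P (f : X → X) (h : X → ℝ) : ℕ → X → ℝ
  | 0, _ => 0
  | n + 1, x => max 0 (h x + P f h n (f x))

lemma P_nonneg (f : X → X) (h : X → ℝ) (n : ℕ) (x : X) : 0 ≤ P f h n x := by
  cases n with
  | zero => simp [P]
  | succ n => exact le_max_left _ _

lemma P_mono (f : X → X) (h : X → ℝ) (n : ℕ) (x : X) : P f h n x ≤ P f h (n + 1) x := by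
  induction n generalizing x with
  | zero => exact P_nonneg f h 1 x
  | succ n ih =>
    exact max_le_max le_rfl (add_le_add le_rfl (ih (f x)))

lemma P_meas {f : X → X} {h : X → ℝ} (hfm : Measurable f) (hh : Measurable h) (n : ℕ) :
    Measurable (P f h n) := by
  induction n with
  | zero => simpa [P] using measurable_const
  | succ n ih =>
    exact measurable_const.max (hh.add (ih.comp hfm))

lemma P_le (f : X → X) (h : X → ℝ) (C : ℝ) (hC0 : 0 ≤ C) (hC : ∀ x, h x ≤ C) (n : ℕ) (x : X) :
    P f h n x ≤ n * C := by
  induction n generalizing x with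
  | zero => simp [P]
  | succ n ih =>
    simp only [P]
    refine max_le (by positivity) ?_
    have h1 := ih (f x)
    have h2 := hC x
    push_cast
    nlinarith

lemma S_le_P (f : X → X) (h : X → ℝ) (n : ℕ) (x : X) :
    ∑ k ∈ Finset.range n, h (f^[k] x) ≤ P f h n x := by
  induction n generalizing x with
  | zero => simp [P]
  | succ n ih =>
    rw [Finset.sum_range_succ']
    simp only [Function.iterate_succ_apply, Function.iterate_zero_apply, P]
    have := ih (f x)
    refine le_trans ?_ (le_max_right _ _)
    linarith

lemma integrable_P (μ : Measure X) [IsProbabilityMeasure μ] {f : X → X} {h : X → ℝ}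
    (hfm : Measurable f) (hh : Measurable h) (C : ℝ) (hC0 : 0 ≤ C) (hC : ∀ x, h x ≤ C) (n : ℕ) :
    Integrable (P f h n) μ := by
  refine (integrable_const ((n : ℝ) * C)).mono' (P_meas hfm hh n).aestronglyMeasurable ?_
  refine ae_of_all _ fun x => ?_
  rw [Real.norm_eq_abs, abs_of_nonneg (P_nonneg f h n x)]
  exact P_le f h C hC0 hC n x

/-- Hopf-Garsia maximal ergodic inequality. -/
lemma hopf (μ : Measure X) [IsProbabilityMeasure μ] {f : X → X}
    (hf : MeasurePreserving f μ μ) {h : X → ℝ} (hh : Measurable h)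
    (C : ℝ) (hC0 : 0 ≤ C) (hC : ∀ x, |h x| ≤ C) (n : ℕ) :
    0 ≤ ∫ x in {x | 0 < P f h n x}, h x ∂μ := by
  have hCle : ∀ x, h x ≤ C := fun x => (abs_le.1 (hC x)).2
  have hPi : ∀ k, Integrable (P f h k) μ :=
    fun k => integrable_P μ hf.measurable hh C hC0 hCle k
  have hPfi : ∀ k, Integrable (fun x => P f h k (f x)) μ := by
    intro k
    refine (integrable_const ((k : ℝ) * C)).mono'
      (((P_meas hf.measurable hh k).comp hf.measurable).aestronglyMeasurable) ?_
    refine ae_of_all _ fun x => ?_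
    rw [Real.norm_eq_abs, abs_of_nonneg (P_nonneg f h k (f x))]
    exact P_le f h C hC0 hCle k (f x)
  have hhi : Integrable h μ := by
    refine (integrable_const C).mono' hh.aestronglyMeasurable ?_
    exact ae_of_all _ fun x => by rw [Real.norm_eq_abs]; exact hC x
  cases n with
  | zero =>
    have : {x : X | 0 < P f h 0 x} = ∅ := by
      ext x; simp [P]
    simp [this]
  | succ n =>
    set E : Set X := {x | 0 < P f h (n + 1) x} with hE_def
    have hEm : MeasurableSet E := measurableSet_lt measurable_const (P_meas hf.measurable hh (n + 1))
    -- on E, h x = P (n+1) x - P n (f x)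
    have hkey : ∀ x ∈ E, h x = P f h (n + 1) x - P f h n (f x) := by
      intro x hx
      have hx' : 0 < P f h (n + 1) x := hx
      have : P f h (n + 1) x = h x + P f h n (f x) := by
        simp only [P] at hx' ⊢
        rcases le_or_gt 0 (h x + P f h n (f x)) with h1 | h1
        · exact max_eq_right h1
        · rw [max_eq_left h1.le] at hx'; linarith
      linarith
    have step1 : ∫ x in E, h x ∂μ
        = ∫ x in E, P f h (n + 1) x ∂μ - ∫ x in E, P f h n (f x) ∂μ := by
      rw [← integral_sub ((hPi (n + 1)).integrableOn) ((hPfi n).integrableOn)]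
      refine setIntegral_congr_fun hEm fun x hx => ?_
      exact hkey x hx
    have step2 : ∫ x in E, P f h (n + 1) x ∂μ = ∫ x, P f h (n + 1) x ∂μ := by
      rw [← integral_add_compl hEm (hPi (n + 1))]
      have : ∫ x in Eᶜ, P f h (n + 1) x ∂μ = 0 := by
        refine setIntegral_eq_zero_of_forall_eq_zero fun x hx => ?_
        have h1 : ¬ 0 < P f h (n + 1) x := hx
        exact le_antisymm (not_lt.1 h1) (P_nonneg f h (n + 1) x)
      rw [this, add_zero]
    have step3 : ∫ x in E, P f h n (f x) ∂μ ≤ ∫ x, P f h n (f x) ∂μ :=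
      setIntegral_le_integral (hPfi n) (ae_of_all _ fun x => P_nonneg f h n (f x))
    have step4 : ∫ x, P f h n (f x) ∂μ = ∫ x, P f h n x ∂μ := by
      symm
      calc ∫ x, P f h n x ∂μ = ∫ x, P f h n x ∂(Measure.map f μ) := by rw [hf.map_eq]
        _ = ∫ x, P f h n (f x) ∂μ :=
          integral_map hf.measurable.aemeasurable
            (P_meas hf.measurable hh n).aestronglyMeasurable
    have step5 : ∫ x, P f h n x ∂μ ≤ ∫ x, P f h (n + 1) x ∂μ :=
      integral_mono (hPi n) (hPi (n + 1)) fun x => P_mono f h n x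
    rw [step1, step2]
    linarith
  
/-- Maximal ergodic inequality, measure form, for `h = 1_A - t`. -/
lemma maximal (μ : Measure X) [IsProbabilityMeasure μ] {f : X → X}
    (hf : MeasurePreserving f μ μ) {A : Set X} (hA : MeasurableSet A)
    {t : ℝ} (ht : 0 < t) (ht1 : t ≤ 1) (n : ℕ) :
    μ {x | 0 < P f (fun x => A.indicator (fun _ => (1 : ℝ)) x - t) n x}
      ≤ ENNReal.ofReal ((μ A).toReal / t) := by
  set h : X → ℝ := fun x => A.indicator (fun _ => (1 : ℝ)) x - t with hh_def
  have hhm : Measurable h := (measurable_const.indicator hA).sub measurable_const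
  have habs : ∀ x, |h x| ≤ 1 := by
    intro x
    rw [abs_le]
    by_cases hx : x ∈ A <;>
      simp [hh_def, Set.indicator_of_mem, Set.indicator_of_notMem, hx] <;> constructor <;> linarith
  set E : Set X := {x | 0 < P f h n x} with hE_def
  have hEm : MeasurableSet E := measurableSet_lt measurable_const (P_meas hf.measurable hhm n)
  have hhopf := hopf μ hf hhm 1 zero_le_one habs n
  -- compute the set integral
  have hint : ∫ x in E, h x ∂μ = (μ (E ∩ A)).toReal - t * (μ E).toReal := by
    have h1 : Integrable (fun x => A.indicator (fun _ => (1 : ℝ)) x) μ := by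
      refine (integrable_const (1 : ℝ)).mono'
        (measurable_const.indicator hA).aestronglyMeasurable (ae_of_all _ fun x => ?_)
      by_cases hx : x ∈ A <;>
        simp [Set.indicator_of_mem, Set.indicator_of_notMem, hx]
    rw [hh_def]
    rw [integral_sub h1.integrableOn (integrable_const t).integrableOn]
    rw [setIntegral_indicator hA, setIntegral_const, setIntegral_const]
    simp [mul_comm]
    rfl
  rw [hint] at hhopf
  have hfin : μ E ≠ ⊤ := measure_ne_top μ E
  have hins : (μ (E ∩ A)).toReal ≤ (μ A).toReal :=
    ENNReal.toReal_mono (measure_ne_top μ A) (measure_mono Set.inter_subset_right)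
  have hreal : (μ E).toReal ≤ (μ A).toReal / t := by
    rw [le_div_iff₀ ht]
    nlinarith
  calc μ E = ENNReal.ofReal ((μ E).toReal) := (ENNReal.ofReal_toReal hfin).symm
    _ ≤ ENNReal.ofReal ((μ A).toReal / t) := ENNReal.ofReal_le_ofReal hreal

/-- Elementary inequality for the truncation trick. -/
lemma key_ineq (N a b c : ℝ) (hc : 0 ≤ c) (hab : b ≤ a + c) :
    b - a ≤ min b N - min a N + (if N - c < a then c else 0) := by
  rcases le_or_gt a (N - c) with hle | hlt
  · rw [if_neg (not_lt.2 hle), min_eq_left (by linarith : b ≤ N),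
      min_eq_left (by linarith : a ≤ N)]
    simp
  · rw [if_pos hlt]
    simp only [min_def]
    split_ifs <;> linarith

lemma maximal_iUnion (μ : Measure X) [IsProbabilityMeasure μ] {f : X → X}
    (hf : MeasurePreserving f μ μ) {A : Set X} (hA : MeasurableSet A)
    {t : ℝ} (ht : 0 < t) (ht1 : t ≤ 1) :
    μ (⋃ n, {x | 0 < P f (fun x => A.indicator (fun _ => (1 : ℝ)) x - t) n x})
      ≤ ENNReal.ofReal ((μ A).toReal / t) := by
  have hdir : Directed (· ⊆ ·)
      (fun n => {x | 0 < P f (fun x => A.indicator (fun _ => (1 : ℝ)) x - t) n x}) := by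
    have hmono : Monotone
        (fun n => {x | 0 < P f (fun x => A.indicator (fun _ => (1 : ℝ)) x - t) n x}) := by
      intro a b hab x hx
      exact lt_of_lt_of_le hx (monotone_nat_of_le_succ (fun k => P_mono f _ k x) hab)
    exact hmono.directed_le
  rw [hdir.measure_iUnion]
  exact iSup_le fun n => maximal μ hf hA ht ht1 n

lemma visits_bound {f : X → X} {A : Set X} {t : ℝ} {x : X}
    (hx : x ∉ ⋃ n, {x | 0 < P f (fun x => A.indicator (fun _ => (1 : ℝ)) x - t) n x})
    (n : ℕ) :
    ∑ k ∈ Finset.range n, A.indicator (fun _ => (1 : ℝ)) (f^[k] x) ≤ n * t := by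
  have hP : ¬ 0 < P f (fun x => A.indicator (fun _ => (1 : ℝ)) x - t) n x :=
    fun hpos => hx (Set.mem_iUnion.2 ⟨n, hpos⟩)
  have hS := S_le_P f (fun x => A.indicator (fun _ => (1 : ℝ)) x - t) n x
  have hsum : ∑ k ∈ Finset.range n, (A.indicator (fun _ => (1 : ℝ)) (f^[k] x) - t)
      = (∑ k ∈ Finset.range n, A.indicator (fun _ => (1 : ℝ)) (f^[k] x)) - n * t := by
    rw [Finset.sum_sub_distrib, Finset.sum_const, Finset.card_range, nsmul_eq_mul]
  rw [hsum] at hS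
  push_neg at hP
  linarith

end TemperedAux

/-- At-most-exponential growth along orbits implies temperedness: if
`φ(fⁿ x) ≤ Mⁿ φ(x)` a.e., then `(1/n) log φ(fⁿ x) → 0` a.e. -/
theorem tempered_of_exponential_growth
    {X : Type*} [MeasurableSpace X] (μ : Measure X) [IsProbabilityMeasure μ]
    (f : X → X) (hf : MeasurePreserving f μ μ)
    (φ : X → ℝ) (hφm : Measurable φ) (hφ1 : ∀ x, 1 ≤ φ x)
    (M : ℝ) (hM : 1 ≤ M)
    (hgrowth : ∀ᵐ x ∂μ, ∀ n : ℕ, φ (f^[n] x) ≤ M ^ n * φ x) :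
    ∀ᵐ x ∂μ, Tendsto (fun n : ℕ => Real.log (φ (f^[n] x)) / n) atTop (nhds 0) := by
  classical
  set c := Real.log M with hc_def
  have hc : 0 ≤ c := Real.log_nonneg hM
  set g : X → ℝ := fun x => Real.log (φ x) with hg_def
  have hgm : Measurable g := hφm.log
  have hg0 : ∀ x, 0 ≤ g x := fun x => Real.log_nonneg (hφ1 x)
  have hφpos : ∀ x, 0 < φ x := fun x => lt_of_lt_of_le one_pos (hφ1 x)
  -- Step A: a.e. one-step bound along the full orbit
  have hstep_ae : ∀ᵐ x ∂μ, ∀ k : ℕ, g (f^[k + 1] x) ≤ g (f^[k] x) + c := by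
    have h1 : ∀ᵐ x ∂μ, φ (f x) ≤ M * φ x := by
      filter_upwards [hgrowth] with x hx
      simpa using hx 1
    rw [ae_all_iff]
    intro k
    have hSm : MeasurableSet {x | φ (f x) ≤ M * φ x} :=
      measurableSet_le (hφm.comp hf.measurable) (measurable_const.mul hφm)
    have hnull : μ {x | φ (f x) ≤ M * φ x}ᶜ = 0 := by
      have := h1
      rw [ae_iff] at this
      simpa [Set.compl_setOf] using this
    have hpre : μ (f^[k] ⁻¹' {x | φ (f x) ≤ M * φ x}ᶜ) = 0 := by
      rw [(hf.iterate k).measure_preimage hSm.compl.nullMeasurableSet]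
      exact hnull
    have hae : ∀ᵐ x ∂μ, φ (f (f^[k] x)) ≤ M * φ (f^[k] x) := by
      rw [ae_iff]
      simpa [Set.preimage, Set.compl_setOf] using hpre
    filter_upwards [hae] with x hx
    rw [Function.iterate_succ_apply' f k x]
    have hlog : g (f (f^[k] x)) ≤ Real.log (M * φ (f^[k] x)) := by
      rw [hg_def]
      exact Real.log_le_log (hφpos _) hx
    rw [Real.log_mul (ne_of_gt (lt_of_lt_of_le one_pos hM)) (ne_of_gt (hφpos _))] at hlog
    rw [hg_def] at hlog ⊢
    simp only [hc_def]
    linarith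
  -- The bad sets
  set A : ℕ → Set X := fun N => {x | (N : ℝ) - c < g x} with hA_def
  have hA : ∀ N, MeasurableSet (A N) := fun N => measurableSet_lt measurable_const hgm
  set t : ℕ → ℝ := fun m => 1 / ((m : ℝ) + 1) with ht_def
  have ht : ∀ m, 0 < t m := fun m => by positivity
  have ht1 : ∀ m, t m ≤ 1 := fun m => by
    rw [ht_def]
    rw [div_le_one (by positivity)]
    simp
  set G : ℕ → ℕ → Set X := fun N m =>
    ⋃ n, {x | 0 < TemperedAux.P f (fun x => (A N).indicator (fun _ => (1 : ℝ)) x - t m) n x}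
    with hG_def
  have hGbound : ∀ N m, μ (G N m) ≤ ENNReal.ofReal ((μ (A N)).toReal / t m) :=
    fun N m => TemperedAux.maximal_iUnion μ hf (hA N) (ht m) (ht1 m)
  -- the measure of A N tends to 0
  have htendA : Tendsto (fun N => μ (A N)) atTop (nhds 0) := by
    have hanti : Antitone A := by
      intro N N' hNN' x hx
      have h1 : (N' : ℝ) - c < g x := hx
      have h2 : (N : ℝ) ≤ (N' : ℝ) := Nat.cast_le.2 hNN'
      exact Set.mem_setOf_eq ▸ (by linarith : (N : ℝ) - c < g x)
    have hempty : ⋂ N, A N = (∅ : Set X) := by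
      ext x
      simp only [Set.mem_iInter, Set.mem_empty_iff_false, iff_false, not_forall]
      obtain ⟨N, hN⟩ := exists_nat_gt (g x + c)
      refine ⟨N, fun hmem => ?_⟩
      have : (N : ℝ) - c < g x := hmem
      linarith
    have := tendsto_measure_iInter_atTop (fun N => (hA N).nullMeasurableSet) hanti
      ⟨0, measure_ne_top μ _⟩
    rw [hempty] at this
    simpa [Function.comp_def] using this
  -- bad sets are null
  have hbad : ∀ m, μ (⋂ N, G N m) = 0 := by
    intro m
    have hb : ∀ N, μ (⋂ N', G N' m) ≤ ENNReal.ofReal ((μ (A N)).toReal / t m) :=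
      fun N => (measure_mono (Set.iInter_subset _ N)).trans (hGbound N m)
    have h3 : Tendsto (fun N => (μ (A N)).toReal) atTop (nhds 0) := by
      have := (ENNReal.tendsto_toReal (by simp : (0 : ENNReal) ≠ ⊤)).comp htendA
      simpa [Function.comp_def] using this
    have h4 : Tendsto (fun N => (μ (A N)).toReal / t m) atTop (nhds 0) := by
      simpa using h3.div_const (t m)
    have h2 : Tendsto (fun N => ENNReal.ofReal ((μ (A N)).toReal / t m)) atTop (nhds 0) := by
      have := (ENNReal.continuous_ofReal.tendsto 0).comp h4
      simpa [Function.comp_def] using this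
    exact le_zero_iff.1 (ge_of_tendsto' h2 hb)
  have hbad_all : ∀ᵐ x ∂μ, ∀ m : ℕ, x ∉ ⋂ N, G N m := by
    rw [ae_all_iff]
    intro m
    rw [ae_iff]
    simp only [not_not, Set.setOf_mem_eq]
    exact hbad m
  -- pointwise conclusion
  filter_upwards [hstep_ae, hbad_all] with x hx hbadx
  have hnonneg : ∀ n : ℕ, 0 ≤ g (f^[n] x) / n :=
    fun n => div_nonneg (hg0 _) (Nat.cast_nonneg n)
  have hkey : ∀ m : ℕ, ∃ N : ℕ, ∀ n : ℕ,
      g (f^[n] x) ≤ g x + N + c * (n * t m) := by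
    intro m
    obtain ⟨N, hN⟩ : ∃ N, x ∉ G N m := by
      by_contra hcon
      push_neg at hcon
      exact hbadx m (Set.mem_iInter.2 hcon)
    refine ⟨N, fun n => ?_⟩
    have hV : ∑ k ∈ Finset.range n, (A N).indicator (fun _ => (1 : ℝ)) (f^[k] x)
        ≤ n * t m := TemperedAux.visits_bound hN n
    have tele : g (f^[n] x) - g x
        = ∑ k ∈ Finset.range n, (g (f^[k + 1] x) - g (f^[k] x)) :=
      (Finset.sum_range_sub (fun k => g (f^[k] x)) n).symm
    have hterm : ∀ k ∈ Finset.range n, g (f^[k + 1] x) - g (f^[k] x)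
        ≤ (min (g (f^[k + 1] x)) (N : ℝ) - min (g (f^[k] x)) (N : ℝ))
          + c * (A N).indicator (fun _ => (1 : ℝ)) (f^[k] x) := by
      intro k _
      have h1 := TemperedAux.key_ineq (N : ℝ) (g (f^[k] x)) (g (f^[k + 1] x)) c hc (hx k)
      by_cases hmem : f^[k] x ∈ A N
      · rw [Set.indicator_of_mem hmem]
        rw [if_pos (show (N : ℝ) - c < g (f^[k] x) from hmem)] at h1
        simpa using h1
      · rw [Set.indicator_of_notMem hmem]
        rw [if_neg (show ¬ ((N : ℝ) - c < g (f^[k] x)) from hmem)] at h1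
        simpa using h1
    have hsum := Finset.sum_le_sum hterm
    rw [← tele, Finset.sum_add_distrib] at hsum
    have htel2 : ∑ k ∈ Finset.range n,
        (min (g (f^[k + 1] x)) (N : ℝ) - min (g (f^[k] x)) (N : ℝ))
        = min (g (f^[n] x)) (N : ℝ) - min (g x) (N : ℝ) := by
      simpa using Finset.sum_range_sub (fun k => min (g (f^[k] x)) (N : ℝ)) n
    rw [htel2, ← Finset.mul_sum] at hsum
    have hmin1 : min (g (f^[n] x)) (N : ℝ) ≤ (N : ℝ) := min_le_right _ _
    have hmin2 : (0 : ℝ) ≤ min (g x) (N : ℝ) := le_min (hg0 x) (Nat.cast_nonneg N)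
    have hcV : c * (∑ k ∈ Finset.range n, (A N).indicator (fun _ => (1 : ℝ)) (f^[k] x))
        ≤ c * (n * t m) := mul_le_mul_of_nonneg_left hV hc
    linarith
  -- conclude the limit
  refine tendsto_order.2 ⟨fun ε hε => Eventually.of_forall fun n =>
    lt_of_lt_of_le hε (hnonneg n), fun ε hε => ?_⟩
  obtain ⟨m, hm⟩ := exists_nat_gt (2 * c / ε)
  have h2c : 2 * c < ε * ((m : ℝ) + 1) := by
    have := (div_lt_iff₀ hε).1 hm
    nlinarith
  have hct : c * t m < ε / 2 := by
    have hm1 : (0 : ℝ) < (m : ℝ) + 1 := by positivity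
    rw [ht_def]
    rw [mul_one_div, div_lt_iff₀ hm1]
    nlinarith
  obtain ⟨N, hN⟩ := hkey m
  obtain ⟨n₀, hn₀⟩ := exists_nat_gt ((g x + N) / (ε / 2))
  rw [eventually_atTop]
  refine ⟨max n₀ 1, fun n hn => ?_⟩
  have hn1 : 1 ≤ n := le_trans (le_max_right _ _) hn
  have hnpos : (0 : ℝ) < n := by exact_mod_cast hn1
  have hb := hN n
  have hdiv : g (f^[n] x) / n ≤ (g x + N) / n + c * t m := by
    calc g (f^[n] x) / n ≤ (g x + N + c * (n * t m)) / n := by gcongr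
      _ = (g x + N) / n + c * t m := by field_simp
  have hfrac : (g x + N) / n < ε / 2 := by
    rw [div_lt_iff₀ hnpos]
    have hcast : (n₀ : ℝ) ≤ n := by exact_mod_cast le_trans (le_max_left _ _) hn
    have h0 : 0 ≤ g x + N := add_nonneg (hg0 x) (Nat.cast_nonneg N)
    have := (div_lt_iff₀ (by linarith : (0 : ℝ) < ε / 2)).1 hn₀
    nlinarith
  calc g (f^[n] x) / n ≤ (g x + N) / n + c * t m := hdiv
    _ < ε / 2 + ε / 2 := by linarith
    _ = ε := by ring
end

section
/- Let f: X → X preserve the probability measure μ and let φ: X → [1, ∞) be measurable. Then φ is tempered (ε-tempered for every ε > 0) if and only if φ is ε-tempered for some ε > 0. -/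
open Filter MeasureTheory

/-- `φ` is `ε`-tempered for the measure-preserving map `f`:
`sup_n e^{-εn} φ(fⁿ x) < ∞` for a.e. `x`. -/
def EpsTempered {X : Type*} [MeasurableSpace X] (μ : Measure X)
    (f : X → X) (φ : X → ℝ) (ε : ℝ) : Prop :=
  ∀ᵐ x ∂μ, ∃ C : ℝ, ∀ n : ℕ, Real.exp (-(ε * n)) * φ (f^[n] x) ≤ C

open scoped ENNReal

open Classical in
/-- the number of times `i < n` with `f^[i] x ∈ D`. -/
noncomputable def visCnt {X : Type*} (f : X → X) (D : Set X) (n : ℕ) (x : X) : ℕ :=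
  ∑ i ∈ Finset.range n, if f^[i] x ∈ D then 1 else 0

lemma visCnt_le {X : Type*} (f : X → X) (D : Set X) (n : ℕ) (x : X) :
    visCnt f D n x ≤ n := by
  classical
  calc visCnt f D n x ≤ ∑ i ∈ Finset.range n, 1 := by
        apply Finset.sum_le_sum; intro i _; split <;> simp
    _ = n := by simp

lemma visCnt_add {X : Type*} (f : X → X) (D : Set X) (a b : ℕ) (x : X) :
    visCnt f D (a + b) x = visCnt f D a x + visCnt f D b (f^[a] x) := by
  classical
  unfold visCnt
  rw [Finset.sum_range_add]
  congr 1
  apply Finset.sum_congr rfl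
  intro i _
  rw [← Function.iterate_add_apply, Nat.add_comm i a]

lemma visCnt_mono {X : Type*} (f : X → X) (D : Set X) {m n : ℕ} (h : m ≤ n) (x : X) :
    visCnt f D m x ≤ visCnt f D n x := by
  classical
  unfold visCnt
  exact Finset.sum_le_sum_of_subset (Finset.range_subset_range.2 h)

lemma measurable_visCnt {X : Type*} [MeasurableSpace X] {f : X → X} (hf : Measurable f)
    {D : Set X} (hD : MeasurableSet D) (n : ℕ) : Measurable (visCnt f D n) := by
  classical
  unfold visCnt
  apply Finset.measurable_sum
  intro i _
  exact Measurable.ite (hD.preimage (hf.iterate i)) measurable_const measurable_const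

lemma lintegral_visCnt {X : Type*} [MeasurableSpace X] {μ : Measure X}
    {f : X → X} (hf : MeasurePreserving f μ μ)
    {D : Set X} (hD : MeasurableSet D) (n : ℕ) :
    ∫⁻ x, (visCnt f D n x : ℝ≥0∞) ∂μ = n * μ D := by
  classical
  have : ∀ x, (visCnt f D n x : ℝ≥0∞)
      = ∑ i ∈ Finset.range n, (f^[i] ⁻¹' D).indicator (fun _ => (1:ℝ≥0∞)) x := by
    intro x
    unfold visCnt
    push_cast
    apply Finset.sum_congr rfl
    intro i _
    by_cases h : f^[i] x ∈ D <;> simp [h, Set.indicator]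
  simp only [this]
  rw [lintegral_finset_sum]
  · have : ∀ i, ∫⁻ x, (f^[i] ⁻¹' D).indicator (fun _ => (1:ℝ≥0∞)) x ∂μ = μ D := by
      intro i
      rw [lintegral_indicator (hD.preimage (hf.measurable.iterate i))]
      simp [(hf.iterate i).measure_preimage hD.nullMeasurableSet]
    simp [this, Finset.sum_const]
  · intro i _
    exact (measurable_const.indicator (hD.preimage (hf.measurable.iterate i)))

/-- points where some initial segment of the orbit has `D`-visit frequency `≥ 1/r`,
witnessed by some `n ∈ [1, L]`. -/
def maxE {X : Type*} (f : X → X) (D : Set X) (r L : ℕ) : Set X :=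
  {x | ∃ n, 1 ≤ n ∧ n ≤ L ∧ n ≤ r * visCnt f D n x}

open Classical in
noncomputable def tauF {X : Type*} (f : X → X) (D : Set X) (r L : ℕ) (x : X) : ℕ :=
  if h : x ∈ maxE f D r L then h.choose else 1

lemma tauF_pos {X : Type*} (f : X → X) (D : Set X) (r L : ℕ) (x : X) :
    1 ≤ tauF f D r L x := by
  unfold tauF
  split
  · next h => exact h.choose_spec.1
  · exact le_refl 1

lemma tauF_le {X : Type*} (f : X → X) (D : Set X) (r : ℕ) {L : ℕ} (hL : 1 ≤ L) (x : X) :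
    tauF f D r L x ≤ L := by
  unfold tauF
  split
  · next h => exact h.choose_spec.2.1
  · exact hL

lemma tauF_interval {X : Type*} (f : X → X) (D : Set X) (r L : ℕ) (x : X) :
    visCnt f (maxE f D r L) (tauF f D r L x) x ≤ r * visCnt f D (tauF f D r L x) x := by
  unfold tauF
  split
  · next h =>
    calc visCnt f (maxE f D r L) h.choose x ≤ h.choose := visCnt_le _ _ _ _
      _ ≤ r * visCnt f D h.choose x := h.choose_spec.2.2
  · next h =>
    have : visCnt f (maxE f D r L) 1 x = 0 := by
      classical
      rw [show (1:ℕ) = 0 + 1 by rfl]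
      unfold visCnt
      rw [Finset.sum_range_succ]
      simp [h]
    simp [this]

noncomputable def tSeq {X : Type*} (f : X → X) (D : Set X) (r L : ℕ) (x : X) : ℕ → ℕ
  | 0 => 0
  | (k+1) => tSeq f D r L x k + tauF f D r L (f^[tSeq f D r L x k] x)

lemma tSeq_key {X : Type*} (f : X → X) (D : Set X) (r L : ℕ) (x : X) (k : ℕ) :
    visCnt f (maxE f D r L) (tSeq f D r L x k) x ≤ r * visCnt f D (tSeq f D r L x k) x := by
  induction k with
  | zero => simp [tSeq, visCnt]
  | succ k ih =>
    rw [tSeq, visCnt_add, visCnt_add, Nat.mul_add]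
    exact Nat.add_le_add ih (tauF_interval f D r L _)

lemma tSeq_reach {X : Type*} (f : X → X) (D : Set X) (r : ℕ) {L : ℕ} (hL : 1 ≤ L) (x : X)
    (N : ℕ) : ∃ k, N ≤ tSeq f D r L x k ∧ tSeq f D r L x k ≤ N + L := by
  induction N with
  | zero => exact ⟨0, le_refl _, by simp [tSeq]⟩
  | succ N ih =>
    obtain ⟨k, hk1, hk2⟩ := ih
    rcases Nat.lt_or_ge (tSeq f D r L x k) (N+1) with h | h
    · have heq : tSeq f D r L x k = N := Nat.le_antisymm (Nat.lt_succ_iff.1 h) hk1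
      refine ⟨k+1, ?_, ?_⟩
      · rw [tSeq, heq]
        exact Nat.add_le_add_left (tauF_pos f D r L _) N
      · rw [tSeq, heq]
        have := tauF_le f D r hL (f^[N] x)
        omega
    · exact ⟨k, h, le_trans hk2 (by omega)⟩

lemma maximal_pointwise {X : Type*} (f : X → X) (D : Set X) (r : ℕ) {L : ℕ} (hL : 1 ≤ L)
    (x : X) (N : ℕ) :
    visCnt f (maxE f D r L) N x ≤ r * visCnt f D N x + r * L := by
  obtain ⟨k, hk1, hk2⟩ := tSeq_reach f D r hL x N
  set t := tSeq f D r L x k with ht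
  calc visCnt f (maxE f D r L) N x ≤ visCnt f (maxE f D r L) t x := visCnt_mono f _ hk1 x
    _ ≤ r * visCnt f D t x := tSeq_key f D r L x k
    _ ≤ r * visCnt f D N x + r * L := by
        have : visCnt f D t x ≤ visCnt f D N x + L := by
          have h1 : t = N + (t - N) := by omega
          rw [h1, visCnt_add]
          have := visCnt_le f D (t - N) (f^[N] x)
          omega
        calc r * visCnt f D t x ≤ r * (visCnt f D N x + L) := Nat.mul_le_mul_left r this
          _ = r * visCnt f D N x + r * L := by ring

lemma measurableSet_maxE {X : Type*} [MeasurableSpace X] {f : X → X} (hf : Measurable f)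
    {D : Set X} (hD : MeasurableSet D) (r L : ℕ) : MeasurableSet (maxE f D r L) := by
  have : maxE f D r L = ⋃ n, {x | 1 ≤ n ∧ n ≤ L ∧ n ≤ r * visCnt f D n x} := by
    ext x; simp [maxE]
  rw [this]
  apply MeasurableSet.iUnion
  intro n
  by_cases h1 : 1 ≤ n ∧ n ≤ L
  · have : {x | 1 ≤ n ∧ n ≤ L ∧ n ≤ r * visCnt f D n x}
        = (visCnt f D n) ⁻¹' {m | n ≤ r * m} := by
      ext x; simp [h1.1, h1.2]
    rw [this]
    exact (measurable_visCnt hf hD n) (MeasurableSet.of_discrete)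
  · have : {x | 1 ≤ n ∧ n ≤ L ∧ n ≤ r * visCnt f D n x} = ∅ := by
      ext x; simp only [Set.mem_setOf_eq, Set.mem_empty_iff_false, iff_false]
      intro h; exact h1 ⟨h.1, h.2.1⟩
    rw [this]; exact MeasurableSet.empty

lemma measure_maxE_le {X : Type*} [MeasurableSpace X] {μ : Measure X} [IsProbabilityMeasure μ]
    {f : X → X} (hf : MeasurePreserving f μ μ) {D : Set X} (hD : MeasurableSet D)
    (r : ℕ) {L : ℕ} (hL : 1 ≤ L) :
    μ (maxE f D r L) ≤ r * μ D := by
  have hEmeas := measurableSet_maxE hf.measurable hD r L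
  -- integrated form
  have hint : ∀ N : ℕ, (N : ℝ≥0∞) * μ (maxE f D r L) ≤ r * ((N : ℝ≥0∞) * μ D) + r * L := by
    intro N
    have h1 : ∫⁻ x, (visCnt f (maxE f D r L) N x : ℝ≥0∞) ∂μ = N * μ (maxE f D r L) :=
      lintegral_visCnt hf hEmeas N
    have h2 : ∫⁻ x, ((r * visCnt f D N x + r * L : ℕ) : ℝ≥0∞) ∂μ
        = r * ((N : ℝ≥0∞) * μ D) + r * L := by
      push_cast
      rw [lintegral_add_right _ measurable_const, lintegral_const_mul]
      · rw [lintegral_visCnt hf hD N]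
        simp [measure_univ]
      · exact Measurable.comp (by exact measurable_from_top) (measurable_visCnt hf.measurable hD N)
    rw [← h1, ← h2]
    apply lintegral_mono
    intro x
    exact_mod_cast Nat.cast_le.2 (maximal_pointwise f D r hL x N)
  -- pass to reals and take N → ∞
  have hfin1 : μ (maxE f D r L) ≠ ⊤ := measure_ne_top μ _
  have hfin2 : (r : ℝ≥0∞) * μ D ≠ ⊤ := by
    exact ENNReal.mul_ne_top (by simp) (measure_ne_top μ _)
  rw [← ENNReal.toReal_le_toReal hfin1 hfin2]
  have hreal : ∀ N : ℕ, 1 ≤ N →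
      (μ (maxE f D r L)).toReal ≤ ((r:ℝ≥0∞) * μ D).toReal + (r * L : ℝ) / N := by
    intro N hN
    have := hint N
    have h3 : ((N : ℝ≥0∞) * μ (maxE f D r L)).toReal
        ≤ ((r:ℝ≥0∞) * ((N : ℝ≥0∞) * μ D) + r * L).toReal := by
      apply ENNReal.toReal_mono _ this
      apply ENNReal.add_ne_top.2
      constructor
      · exact ENNReal.mul_ne_top (ENNReal.natCast_ne_top r) (ENNReal.mul_ne_top (ENNReal.natCast_ne_top N) (measure_ne_top μ _))
      · exact ENNReal.mul_ne_top (ENNReal.natCast_ne_top r) (ENNReal.natCast_ne_top L)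
    rw [ENNReal.toReal_mul] at h3
    rw [ENNReal.toReal_add (ENNReal.mul_ne_top (by simp) (ENNReal.mul_ne_top (ENNReal.natCast_ne_top N) (measure_ne_top μ _))) (ENNReal.mul_ne_top (ENNReal.natCast_ne_top r) (ENNReal.natCast_ne_top L))] at h3
    rw [ENNReal.toReal_mul, ENNReal.toReal_mul] at h3
    simp only [ENNReal.toReal_natCast] at h3
    have hNpos : (0:ℝ) < N := by exact_mod_cast hN
    rw [ENNReal.toReal_mul]
    simp only [ENNReal.toReal_natCast]
    have h4 : (N:ℝ) * (μ (maxE f D r L)).toReal ≤ (N:ℝ) * ((r:ℝ) * (μ D).toReal + (r*L:ℝ)/N) := by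
      rw [mul_add]
      calc (N:ℝ) * (μ (maxE f D r L)).toReal ≤ (r:ℝ) * ((N:ℝ) * (μ D).toReal) + ((r:ℝ≥0∞)*L).toReal := h3
        _ = (N:ℝ) * ((r:ℝ) * (μ D).toReal) + (N:ℝ) * ((r*L:ℝ)/N) := by
            rw [ENNReal.toReal_mul]
            simp only [ENNReal.toReal_natCast]
            rw [mul_div_cancel₀ _ (ne_of_gt hNpos)]
            ring
    exact le_of_mul_le_mul_left (by linarith [h4]) hNpos
  have htend : Tendsto (fun N : ℕ => ((r:ℝ≥0∞) * μ D).toReal + (r * L : ℝ) / N) atTop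
      (nhds (((r:ℝ≥0∞) * μ D).toReal)) := by
    have := tendsto_const_div_atTop_nhds_zero_nat (r * L : ℝ)
    simpa using (tendsto_const_nhds.add this)
  apply ge_of_tendsto htend
  filter_upwards [eventually_ge_atTop 1] with N hN using hreal N hN

lemma measure_maxE_iUnion_le {X : Type*} [MeasurableSpace X] {μ : Measure X}
    [IsProbabilityMeasure μ]
    {f : X → X} (hf : MeasurePreserving f μ μ) {D : Set X} (hD : MeasurableSet D) (r : ℕ) :
    μ {x | ∃ n, 1 ≤ n ∧ n ≤ r * visCnt f D n x} ≤ r * μ D := by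
  have hun : {x | ∃ n, 1 ≤ n ∧ n ≤ r * visCnt f D n x} = ⋃ L, maxE f D r (L+1) := by
    ext x
    simp only [Set.mem_setOf_eq, Set.mem_iUnion, maxE]
    constructor
    · rintro ⟨n, hn1, hn2⟩
      exact ⟨n, n, hn1, by omega, hn2⟩
    · rintro ⟨L, n, hn1, _, hn2⟩
      exact ⟨n, hn1, hn2⟩
  rw [hun]
  have hmono : Monotone (fun L => maxE f D r (L+1)) := by
    intro a b hab x hx
    obtain ⟨n, h1, h2, h3⟩ := hx
    exact ⟨n, h1, by omega, h3⟩
  rw [hmono.directed_le.measure_iUnion]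
  exact iSup_le fun L => measure_maxE_le hf hD r (by omega)

/-- `φ` is tempered (i.e. `ε`-tempered for every `ε > 0`) if and only if it is
`ε`-tempered for some `ε > 0`. -/
theorem tempered_iff_eps_tempered
    {X : Type*} [MeasurableSpace X] (μ : Measure X) [IsProbabilityMeasure μ]
    (f : X → X) (hf : MeasurePreserving f μ μ)
    (φ : X → ℝ) (hφm : Measurable φ) (hφ1 : ∀ x, 1 ≤ φ x) :
    (∀ ε : ℝ, 0 < ε → EpsTempered μ f φ ε) ↔
      (∃ ε : ℝ, 0 < ε ∧ EpsTempered μ f φ ε) := by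
  constructor
  · intro h; exact ⟨1, one_pos, h 1 one_pos⟩
  rintro ⟨ε, hεpos, hε⟩ ε' hε'
  -- the "tempering constant" function
  set G : X → ℝ≥0∞ := fun x => ⨆ n : ℕ, ENNReal.ofReal (Real.exp (-(ε * n)) * φ (f^[n] x))
    with hGdef
  have hGmeas : Measurable G := by
    apply Measurable.iSup
    intro n
    exact ENNReal.measurable_ofReal.comp (measurable_const.mul (hφm.comp (hf.measurable.iterate n)))
  have hGfin : ∀ᵐ x ∂μ, G x ≠ ⊤ := by
    filter_upwards [hε] with x hx
    obtain ⟨C, hC⟩ := hx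
    have : G x ≤ ENNReal.ofReal C := iSup_le fun n => ENNReal.ofReal_le_ofReal (hC n)
    exact ne_top_of_le_ne_top ENNReal.ofReal_ne_top this
  -- orbit bound from `G ≤ K`
  have hKb : ∀ (K : ℕ) (y : X), G y ≤ K → ∀ j : ℕ, φ (f^[j] y) ≤ K * Real.exp (ε * j) := by
    intro K y hy j
    have h1 : ENNReal.ofReal (Real.exp (-(ε * j)) * φ (f^[j] y)) ≤ (K : ℝ≥0∞) :=
      le_trans (le_iSup (fun n : ℕ => ENNReal.ofReal (Real.exp (-(ε * n)) * φ (f^[n] y))) j) hy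
    rw [← ENNReal.ofReal_natCast] at h1
    have h2 : Real.exp (-(ε * j)) * φ (f^[j] y) ≤ K :=
      (ENNReal.ofReal_le_ofReal_iff (Nat.cast_nonneg K)).1 h1
    have hp := Real.exp_pos (ε * j)
    rw [Real.exp_neg, inv_mul_le_iff₀ hp] at h2
    rw [mul_comm]
    exact h2
  -- choose the density parameter r
  obtain ⟨r0, hr0⟩ := exists_nat_ge (3 * ε / ε')
  set r : ℕ := r0 + 1 with hrdef
  have hr1 : 1 ≤ r := by omega
  have hrR : (0:ℝ) < r := by positivity
  have hrε : 3 * ε / r ≤ ε' := by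
    rw [div_le_iff₀ hrR]
    have h1 : 3 * ε / ε' ≤ (r:ℝ) := le_trans hr0 (by rw [hrdef]; push_cast; linarith)
    rw [div_le_iff₀ hε'] at h1
    linarith [h1]
  -- the eventual subexponential bound
  set P : X → Prop := fun x => ∀ᶠ n : ℕ in atTop, φ (f^[n] x) ≤ Real.exp (3 * ε * n / r)
    with hPdef
  set D : ℕ → Set X := fun K => {x | (K:ℝ≥0∞) < G x} with hDdef
  have hDmeas : ∀ K, MeasurableSet (D K) := fun K => measurableSet_lt measurable_const hGmeas
  -- main covering claim
  have claim : ∀ K : ℕ, {x | ¬ P x} ⊆ {x | ∃ n, 1 ≤ n ∧ n ≤ r * visCnt f (D K) n x} := by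
    intro K x
    rw [Set.mem_setOf_eq, Set.mem_setOf_eq]
    intro hnotP
    by_contra hx
    push_neg at hx
    apply hnotP
    have hx' : ∀ n, 1 ≤ n → r * visCnt f (D K) n x < n := fun n h1 => hx n h1
    -- gap estimate
    have gap : ∀ n : ℕ, ∃ m, m ≤ n ∧ G (f^[m] x) ≤ K ∧ r * (n - m) < n + 1 := by
      intro n
      classical
      set M := (Finset.range (n+1)).filter (fun m => G (f^[m] x) ≤ K) with hM
      have hMne : M.Nonempty := by
        by_contra hemp
        rw [Finset.not_nonempty_iff_eq_empty] at hemp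
        have hall : ∀ i ∈ Finset.range (n+1), f^[i] x ∈ D K := by
          intro i hi
          by_contra hcon
          have : i ∈ M := by
            rw [hM, Finset.mem_filter]
            refine ⟨hi, ?_⟩
            simp only [hDdef, Set.mem_setOf_eq, not_lt] at hcon
            exact hcon
          rw [hemp] at this
          exact absurd this (Finset.notMem_empty i)
        have hcnt : visCnt f (D K) (n+1) x = n + 1 := by
          unfold visCnt
          rw [Finset.sum_congr rfl (fun i hi => by rw [if_pos (hall i hi)])]
          simp
        have := hx' (n+1) (by omega)
        rw [hcnt] at this
        nlinarith [this, hr1]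
      set m := M.max' hMne with hm
      have hmM : m ∈ M := M.max'_mem hMne
      rw [hM, Finset.mem_filter, Finset.mem_range] at hmM
      refine ⟨m, by omega, hmM.2, ?_⟩
      -- all i ∈ (m, n] are in D K
      have htrail : ∀ i ∈ Finset.Ioc m n, f^[i] x ∈ D K := by
        intro i hi
        rw [Finset.mem_Ioc] at hi
        by_contra hcon
        have hiM : i ∈ M := by
          rw [hM, Finset.mem_filter, Finset.mem_range]
          refine ⟨by omega, ?_⟩
          simp only [hDdef, Set.mem_setOf_eq, not_lt] at hcon
          exact hcon
        have := M.le_max' i hiM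
        omega
      have hsub : Finset.Ioc m n ⊆ Finset.range (n+1) := by
        intro i hi
        rw [Finset.mem_Ioc] at hi
        rw [Finset.mem_range]
        omega
      have hcnt2 : n - m ≤ visCnt f (D K) (n+1) x := by
        classical
        unfold visCnt
        refine le_trans ?_ (Finset.sum_le_sum_of_subset hsub)
        calc n - m = ∑ i ∈ Finset.Ioc m n, 1 := by
              rw [Finset.sum_const, Nat.card_Ioc]; simp
          _ ≤ _ := Finset.sum_le_sum (fun i hi => by rw [if_pos (htrail i hi)])
      calc r * (n - m) ≤ r * visCnt f (D K) (n+1) x := Nat.mul_le_mul_left r hcnt2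
        _ < n + 1 := hx' (n+1) (by omega)
    -- eventual bound
    have h2n : Tendsto (fun n : ℕ => Real.exp ((2*(n:ℝ) - 1) * ε / r)) atTop atTop := by
      apply Real.tendsto_exp_atTop.comp
      apply Tendsto.atTop_div_const hrR
      apply Tendsto.atTop_mul_const hεpos
      have h1 : Tendsto (fun n : ℕ => 2*(n:ℝ)) atTop atTop :=
        (tendsto_natCast_atTop_atTop).const_mul_atTop (by norm_num)
      have := tendsto_atTop_add_const_right atTop (-1 : ℝ) h1
      simpa [sub_eq_add_neg] using this
    have hev := h2n.eventually_ge_atTop (K:ℝ)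
    rw [hPdef]
    filter_upwards [hev] with n hn
    obtain ⟨m, hm, hGm, hgap⟩ := gap n
    have heq : f^[n] x = f^[n-m] (f^[m] x) := by
      rw [← Function.iterate_add_apply]
      congr 1
      omega
    have hb1 : φ (f^[n] x) ≤ K * Real.exp (ε * (n - m : ℕ)) := by
      rw [heq]; exact hKb K (f^[m] x) hGm (n - m)
    have hnm : ((n - m : ℕ) : ℝ) ≤ ((n:ℝ) + 1) / r := by
      rw [le_div_iff₀ hrR]
      have : (r * (n - m) : ℕ) ≤ ((n:ℕ) + 1) := le_of_lt hgap
      calc ((n-m:ℕ):ℝ) * r = ((r * (n-m) : ℕ) : ℝ) := by push_cast; ring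
        _ ≤ (n:ℝ) + 1 := by exact_mod_cast this
    have hb2 : φ (f^[n] x) ≤ K * Real.exp (ε * (((n:ℝ)+1)/r)) := by
      refine le_trans hb1 (mul_le_mul_of_nonneg_left (Real.exp_le_exp.2 ?_) (Nat.cast_nonneg K))
      exact mul_le_mul_of_nonneg_left hnm (le_of_lt hεpos)
    refine le_trans hb2 ?_
    calc (K:ℝ) * Real.exp (ε * (((n:ℝ)+1)/r))
        ≤ Real.exp ((2*(n:ℝ) - 1) * ε / r) * Real.exp (ε * (((n:ℝ)+1)/r)) :=
          mul_le_mul_of_nonneg_right hn (le_of_lt (Real.exp_pos _))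
      _ = Real.exp (3 * ε * n / r) := by
          rw [← Real.exp_add]
          congr 1
          field_simp
          ring
  -- the bad set is null
  have hbad : μ {x | ¬ P x} = 0 := by
    have hle : ∀ K : ℕ, μ {x | ¬ P x} ≤ r * μ (D K) := fun K =>
      le_trans (measure_mono (claim K)) (measure_maxE_iUnion_le hf (hDmeas K) r)
    have hanti : Antitone D := by
      intro a b hab x hx
      rw [hDdef, Set.mem_setOf_eq] at hx ⊢
      exact lt_of_le_of_lt (by exact_mod_cast Nat.cast_le.2 hab) hx
    have hinter : (⋂ K, D K) ⊆ {x | G x = ⊤} := by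
      intro x hx
      rw [Set.mem_iInter] at hx
      rw [Set.mem_setOf_eq]
      by_contra hcon
      obtain ⟨n, hn⟩ := ENNReal.exists_nat_gt hcon
      exact absurd (hx n) (not_lt.2 (le_of_lt hn))
    have h0 : μ (⋂ K, D K) = 0 := by
      apply measure_mono_null hinter
      have := hGfin
      rw [ae_iff] at this
      simpa using this
    have htd : Tendsto (fun K => μ (D K)) atTop (nhds 0) := by
      have := tendsto_measure_iInter_atTop (fun K => (hDmeas K).nullMeasurableSet) hanti
        ⟨0, measure_ne_top μ _⟩
      rw [h0] at this
      exact this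
    have htd2 : Tendsto (fun K => (r:ℝ≥0∞) * μ (D K)) atTop (nhds 0) := by
      have := ENNReal.Tendsto.const_mul htd (Or.inr (ENNReal.natCast_ne_top r))
      simpa using this
    exact le_antisymm (ge_of_tendsto' htd2 hle) zero_le
  have hae : ∀ᵐ x ∂μ, P x := by
    rw [ae_iff]
    exact hbad
  -- conclude
  filter_upwards [hae] with x hx
  rw [hPdef] at hx
  obtain ⟨N, hN⟩ := eventually_atTop.1 hx
  refine ⟨1 + ∑ i ∈ Finset.range N, φ (f^[i] x), ?_⟩
  intro n
  have hsum_nonneg : (0:ℝ) ≤ ∑ i ∈ Finset.range N, φ (f^[i] x) :=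
    Finset.sum_nonneg fun i _ => le_trans zero_le_one (hφ1 _)
  by_cases h : n < N
  · have h1 : Real.exp (-(ε' * n)) ≤ 1 := by
      rw [← Real.exp_zero]
      apply Real.exp_le_exp.2
      have : (0:ℝ) ≤ ε' * n := mul_nonneg (le_of_lt hε') (Nat.cast_nonneg n)
      linarith
    have h2 : φ (f^[n] x) ≤ ∑ i ∈ Finset.range N, φ (f^[i] x) :=
      Finset.single_le_sum (f := fun i => φ (f^[i] x))
        (fun i _ => le_trans zero_le_one (hφ1 _)) (Finset.mem_range.2 h)
    have h3 : Real.exp (-(ε' * n)) * φ (f^[n] x) ≤ φ (f^[n] x) := by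
      nlinarith [hφ1 (f^[n] x), Real.exp_pos (-(ε' * n))]
    linarith
  · push_neg at h
    have h1 : φ (f^[n] x) ≤ Real.exp (3 * ε * n / r) := hN n h
    have h2 : Real.exp (-(ε' * n)) * φ (f^[n] x)
        ≤ Real.exp (-(ε' * n)) * Real.exp (3 * ε * n / r) := by
      apply mul_le_mul_of_nonneg_left h1 (le_of_lt (Real.exp_pos _))
    rw [← Real.exp_add] at h2
    have h3 : -(ε' * n) + 3 * ε * n / r ≤ 0 := by
      have h4 : 3 * ε * (n:ℝ) / r ≤ ε' * n := by
        have := mul_le_mul_of_nonneg_right hrε (Nat.cast_nonneg (α := ℝ) n)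
        calc 3 * ε * (n:ℝ) / r = (3 * ε / r) * n := by ring
          _ ≤ ε' * n := this
      linarith
    have h5 : Real.exp (-(ε' * n) + 3 * ε * n / r) ≤ 1 := by
      rw [← Real.exp_zero]
      exact Real.exp_le_exp.2 h3
    linarith
end
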